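/- For every integer n ≥ 1, the number of Catalan words of length n avoiding the vincular pattern 23-1 equals the Fibonacci number F_{2n−1}. -/
import Mathlib


/-- A Catalan word: a word of positive integers starting with 1 in which each
letter exceeds its predecessor by at most 1. -/
def IsCatalanWord {n : ℕ} (w : Fin n → ℕ) : Prop :=
  (∀ i, 1 ≤ w i) ∧ (∀ h : 0 < n, w ⟨0, h⟩ = 1) ∧
  ∀ i : ℕ, ∀ h : i + 1 < n, w ⟨i + 1, h⟩ ≤ w ⟨i, by omega⟩ + 1

/-- `w` contains the vincular pattern 23-1: there are indices `i` and `k` with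
`i + 1 < k`, `w i < w (i+1)` and `w k < w i`. -/
def Contains23_1 {n : ℕ} (w : Fin n → ℕ) : Prop :=
  ∃ i k : ℕ, ∃ hk : k < n, ∃ hik : i + 1 < k,
    w ⟨i, by omega⟩ < w ⟨i + 1, by omega⟩ ∧ w ⟨k, hk⟩ < w ⟨i, by omega⟩

namespace Cat23


/-- entry at index `i`, default 0 -/
def g (l : List ℕ) (i : ℕ) : ℕ := l.getD i 0

/-- last entry -/
def lst (l : List ℕ) : ℕ := g l (l.length - 1)

def GoodL (l : List ℕ) : Prop :=
  (∀ i < l.length, 1 ≤ g l i) ∧ g l 0 = 1 ∧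
  (∀ i, i + 1 < l.length → g l (i + 1) ≤ g l i + 1) ∧
  (∀ i k, i + 1 < k → k < l.length → g l i < g l (i + 1) → g l i ≤ g l k)

noncomputable def flo (l : List ℕ) : ℕ :=
  max 1 ((Finset.range l.length).sup fun i =>
    if g l i < g l (i + 1) ∧ i + 1 < l.length then g l i else 0)

lemma g_append_lt (l : List ℕ) (v i : ℕ) (h : i < l.length) :
    g (l ++ [v]) i = g l i := List.getD_append _ _ _ _ h

lemma g_append_eq (l : List ℕ) (v : ℕ) : g (l ++ [v]) l.length = v := by
  unfold g
  rw [List.getD_append_right _ _ _ _ le_rfl]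
  simp

lemma lst_append (l : List ℕ) (v : ℕ) : lst (l ++ [v]) = v := by
  unfold lst
  have : (l ++ [v]).length - 1 = l.length := by simp
  rw [this, g_append_eq]

lemma one_le_flo (l : List ℕ) : 1 ≤ flo l := le_max_left _ _

lemma le_flo_of_ascent (l : List ℕ) {i : ℕ} (h1 : i + 1 < l.length)
    (h2 : g l i < g l (i + 1)) : g l i ≤ flo l := by
  have hm : i ∈ Finset.range l.length := Finset.mem_range.mpr (by omega)
  have := Finset.le_sup (f := fun i =>
    if g l i < g l (i + 1) ∧ i + 1 < l.length then g l i else 0) hm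
  simp only [h2, h1, and_self, if_true] at this
  exact this.trans (le_max_right _ _)

lemma flo_le (l : List ℕ) {v : ℕ} (h1 : 1 ≤ v)
    (h : ∀ i, i + 1 < l.length → g l i < g l (i + 1) → g l i ≤ v) : flo l ≤ v := by
  refine max_le h1 (Finset.sup_le fun i _ => ?_)
  split_ifs with hc
  · exact h i hc.2 hc.1
  · omega

lemma flo_append (l : List ℕ) (hl : l ≠ []) (v : ℕ) :
    flo (l ++ [v]) = if lst l < v then max (flo l) (lst l) else flo l := by
  have hlen : 1 ≤ l.length := List.length_pos_iff.mpr hl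
  have hgl : ∀ i < l.length, g (l ++ [v]) i = g l i := fun i hi => g_append_lt l v i hi
  -- key: characterize both sides by le_antisymm
  have hlst : g l (l.length - 1) = lst l := rfl
  apply le_antisymm
  · apply flo_le
    · split_ifs
      · exact le_trans (one_le_flo l) (le_max_left _ _)
      · exact one_le_flo l
    · intro i hi hasc
      rw [List.length_append, List.length_singleton] at hi
      rcases lt_or_eq_of_le (Nat.lt_succ_iff.mp hi) with hi' | hi'
      · -- i + 1 < l.length : old ascent
        rw [g_append_lt l v i (by omega), g_append_lt l v (i + 1) (by omega)] at hasc
        rw [g_append_lt l v i (by omega)]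
        have := le_flo_of_ascent l hi' hasc
        split_ifs <;> [exact this.trans (le_max_left _ _); exact this]
      · -- i + 1 = l.length : new ascent at the end
        have hieq : i = l.length - 1 := by omega
        have hv : g (l ++ [v]) (i + 1) = v := by
          rw [show i + 1 = l.length by omega, g_append_eq]
        rw [g_append_lt l v i (by omega), hv] at hasc
        rw [g_append_lt l v i (by omega)]
        rw [hieq, hlst] at hasc ⊢
        rw [if_pos hasc]
        exact le_max_right _ _
  · have hb : flo l ≤ flo (l ++ [v]) := by
      apply flo_le _ (one_le_flo _)
      intro i hi hasc
      rw [← g_append_lt l v i (by omega), ← g_append_lt l v (i + 1) (by omega)] at hasc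
      rw [← g_append_lt l v i (by omega)]
      exact le_flo_of_ascent _ (by simp; omega) hasc
    split_ifs with hc
    · refine max_le hb ?_
      rw [← hlst, ← g_append_lt l v (l.length - 1) (by omega)]
      apply le_flo_of_ascent
      · simp; omega
      · rw [show l.length - 1 + 1 = l.length by omega, g_append_eq]
        rw [g_append_lt l v (l.length - 1) (by omega), hlst]
        exact hc
    · exact hb

lemma good_of_append {l : List ℕ} {v : ℕ} (hl : l ≠ []) (h : GoodL (l ++ [v])) : GoodL l := by
  obtain ⟨h1, h2, h3, h4⟩ := h
  have hlen : 1 ≤ l.length := List.length_pos_iff.mpr hl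
  refine ⟨fun i hi => ?_, ?_, fun i hi => ?_, fun i k hik hk hasc => ?_⟩
  · have := h1 i (by simp; omega)
    rwa [g_append_lt l v i hi] at this
  · have := h2
    rwa [g_append_lt l v 0 (by omega)] at this
  · have := h3 i (by simp; omega)
    rwa [g_append_lt l v (i + 1) (by omega), g_append_lt l v i (by omega)] at this
  · have := h4 i k hik (by simp; omega)
    rw [g_append_lt l v i (by omega), g_append_lt l v (i + 1) (by omega),
      g_append_lt l v k (by omega)] at this
    exact this hasc

lemma good_append_iff {l : List ℕ} (hl : l ≠ []) (hg : GoodL l) (v : ℕ) :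
    GoodL (l ++ [v]) ↔ flo l ≤ v ∧ v ≤ lst l + 1 := by
  have hlen : 1 ≤ l.length := List.length_pos_iff.mpr hl
  obtain ⟨h1, h2, h3, h4⟩ := hg
  constructor
  · rintro ⟨p1, p2, p3, p4⟩
    constructor
    · apply flo_le
      · have := p1 l.length (by simp)
        rwa [g_append_eq] at this
      · intro i hi hasc
        have := p4 i l.length (by omega) (by simp)
        rw [g_append_lt l v i (by omega), g_append_lt l v (i + 1) (by omega),
          g_append_eq] at this
        exact this hasc
    · have := p3 (l.length - 1) (by simp; omega)
      rwa [show l.length - 1 + 1 = l.length by omega, g_append_eq,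
        g_append_lt l v (l.length - 1) (by omega)] at this
  · rintro ⟨hf, hv⟩
    have hv1 : 1 ≤ v := le_trans (one_le_flo l) hf
    refine ⟨fun i hi => ?_, ?_, fun i hi => ?_, fun i k hik hk hasc => ?_⟩
    · rw [List.length_append, List.length_singleton] at hi
      rcases lt_or_eq_of_le (Nat.lt_succ_iff.mp hi) with hi' | hi'
      · rw [g_append_lt l v i hi']; exact h1 i hi'
      · rw [hi', g_append_eq]; exact hv1
    · rw [g_append_lt l v 0 (by omega)]; exact h2
    · rw [List.length_append, List.length_singleton] at hi
      rcases lt_or_eq_of_le (Nat.lt_succ_iff.mp hi) with hi' | hi'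
      · rw [g_append_lt l v (i + 1) (by omega), g_append_lt l v i (by omega)]
        exact h3 i hi'
      · rw [show i + 1 = l.length by omega, g_append_eq,
          g_append_lt l v i (by omega), show i = l.length - 1 by omega]
        exact hv
    · rw [List.length_append, List.length_singleton] at hk
      have hil : i + 1 < l.length := by omega
      rw [g_append_lt l v i (by omega), g_append_lt l v (i + 1) (by omega)] at hasc
      rw [g_append_lt l v i (by omega)]
      rcases lt_or_eq_of_le (Nat.lt_succ_iff.mp hk) with hk' | hk'
      · rw [g_append_lt l v k hk']
        exact h4 i k hik hk' hasc
      · rw [hk', g_append_eq]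
        exact le_trans (le_flo_of_ascent l hil hasc) hf

lemma good_singleton : GoodL [1] := by
  refine ⟨?_, rfl, ?_, ?_⟩
  · intro i hi
    have : i = 0 := by simpa using hi
    subst this; simp [g]
  · intro i hi; simp at hi
  · intro i k h1 h2 _; simp at h2; omega

lemma flo_singleton (v : ℕ) : flo [v] = 1 := by
  simp [flo]

lemma lst_singleton (v : ℕ) : lst [v] = v := by simp [lst, g]

lemma good_state {l : List ℕ} (hl : l ≠ []) (hg : GoodL l) :
    flo l ≤ lst l ∧ lst l ≤ flo l + 1 := by
  induction l using List.reverseRecOn with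
  | nil => exact absurd rfl hl
  | append_singleton m v ih =>
    rcases eq_or_ne m [] with rfl | hm
    · have : v = 1 := hg.2.1
      subst this
      simp [flo_singleton, lst_singleton]
    · have hgm : GoodL m := good_of_append hm hg
      obtain ⟨i1, i2⟩ := ih hm hgm
      obtain ⟨hf, hv⟩ := (good_append_iff hm hgm v).mp hg
      rw [lst_append, flo_append m hm v]
      split_ifs with hc <;> omega

lemma good_ne_nil {l : List ℕ} (hg : GoodL l) : l ≠ [] := by
  rintro rfl
  simpa [g] using hg.2.1

lemma gsing (a : ℕ) : g [a] 0 = a := rfl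

noncomputable def AB : ℕ → Finset (List ℕ) × Finset (List ℕ) := fun t =>
  Nat.rec ({[1]}, ∅) (fun _ P =>
    (P.1.image (fun l => l ++ [lst l]) ∪ P.2.image (fun l => l ++ [lst l - 1]),
     (P.1.image (fun l => l ++ [lst l + 1]) ∪ P.2.image (fun l => l ++ [lst l])) ∪
       P.2.image (fun l => l ++ [lst l + 1]))) t

lemma AB_zero : AB 0 = ({[1]}, ∅) := rfl

lemma AB_succ (t : ℕ) : AB (t + 1) =
    ((AB t).1.image (fun l => l ++ [lst l]) ∪ (AB t).2.image (fun l => l ++ [lst l - 1]),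
     ((AB t).1.image (fun l => l ++ [lst l + 1]) ∪ (AB t).2.image (fun l => l ++ [lst l])) ∪
       (AB t).2.image (fun l => l ++ [lst l + 1])) := rfl

lemma AB_mem (t : ℕ) (l : List ℕ) :
    (l ∈ (AB t).1 ↔ GoodL l ∧ l.length = t + 1 ∧ lst l = flo l) ∧
    (l ∈ (AB t).2 ↔ GoodL l ∧ l.length = t + 1 ∧ lst l = flo l + 1) := by
  induction t generalizing l with
  | zero =>
    constructor
    · simp only [AB_zero, Finset.mem_singleton]
      constructor
      · rintro rfl
        exact ⟨good_singleton, rfl, by rw [lst_singleton, flo_singleton]⟩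
      · rintro ⟨hg, hlen, -⟩
        obtain ⟨a, rfl⟩ := List.length_eq_one_iff.mp hlen
        have ha : a = 1 := by have := hg.2.1; rwa [gsing] at this
        rw [ha]
    · simp only [AB_zero, Finset.notMem_empty, false_iff]
      rintro ⟨hg, hlen, hst⟩
      obtain ⟨a, rfl⟩ := List.length_eq_one_iff.mp hlen
      rw [lst_singleton, flo_singleton] at hst
      have ha : a = 1 := by have := hg.2.1; rwa [gsing] at this
      omega
  | succ t ih =>
    have fwd : ∀ m : List ℕ, ∀ v : ℕ, GoodL m → m.length = t + 1 →
        flo m ≤ v → v ≤ lst m + 1 →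
        GoodL (m ++ [v]) ∧ (m ++ [v]).length = t + 2 ∧ lst (m ++ [v]) = v ∧
          flo (m ++ [v]) = if lst m < v then max (flo m) (lst m) else flo m := by
      intro m v hgm hlm h1 h2
      have hmne : m ≠ [] := good_ne_nil hgm
      exact ⟨(good_append_iff hmne hgm v).mpr ⟨h1, h2⟩, by simp [hlm],
        lst_append m v, flo_append m hmne v⟩
    constructor
    · simp only [AB_succ, Finset.mem_union, Finset.mem_image]
      constructor
      · rintro (⟨m, hmA, rfl⟩ | ⟨m, hmB, rfl⟩)
        · obtain ⟨hgm, hlm, hst⟩ := (ih m).1.mp hmA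
          obtain ⟨q1, q2, q3, q4⟩ := fwd m (lst m) hgm hlm (by omega) (by omega)
          refine ⟨q1, q2, ?_⟩
          rw [q3, q4, if_neg (lt_irrefl _)]
          omega
        · obtain ⟨hgm, hlm, hst⟩ := (ih m).2.mp hmB
          have hflo := one_le_flo m
          obtain ⟨q1, q2, q3, q4⟩ := fwd m (lst m - 1) hgm hlm (by omega) (by omega)
          refine ⟨q1, q2, ?_⟩
          rw [q3, q4, if_neg (by omega)]
          omega
      · rintro ⟨hg, hlen, hst⟩
        rcases List.eq_nil_or_concat l with rfl | ⟨m, v, rfl⟩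
        · simp at hlen
        rw [List.concat_eq_append] at *
        have hlm : m.length = t + 1 := by
          rw [List.length_append, List.length_singleton] at hlen; omega
        have hmne : m ≠ [] := by
          intro h; rw [h] at hlm; simp at hlm
        have hgm : GoodL m := good_of_append hmne hg
        obtain ⟨hf, hv⟩ := (good_append_iff hmne hgm v).mp hg
        obtain ⟨s1, s2⟩ := good_state hmne hgm
        rw [lst_append, flo_append m hmne v] at hst
        by_cases hc : lst m < v
        · rw [if_pos hc] at hst
          omega
        · rw [if_neg hc] at hst
          rcases (by omega : lst m = flo m ∨ lst m = flo m + 1) with hd | hd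
          · left
            have hveq : v = lst m := by omega
            exact ⟨m, (ih m).1.mpr ⟨hgm, hlm, hd⟩, by rw [hveq]⟩
          · right
            have hveq : v = lst m - 1 := by omega
            exact ⟨m, (ih m).2.mpr ⟨hgm, hlm, hd⟩, by rw [hveq]⟩
    · simp only [AB_succ, Finset.mem_union, Finset.mem_image]
      constructor
      · rintro ((⟨m, hmA, rfl⟩ | ⟨m, hmB, rfl⟩) | ⟨m, hmB, rfl⟩)
        · obtain ⟨hgm, hlm, hst⟩ := (ih m).1.mp hmA
          obtain ⟨q1, q2, q3, q4⟩ := fwd m (lst m + 1) hgm hlm (by omega) (by omega)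
          refine ⟨q1, q2, ?_⟩
          rw [q3, q4, if_pos (by omega)]
          omega
        · obtain ⟨hgm, hlm, hst⟩ := (ih m).2.mp hmB
          obtain ⟨q1, q2, q3, q4⟩ := fwd m (lst m) hgm hlm (by omega) (by omega)
          refine ⟨q1, q2, ?_⟩
          rw [q3, q4, if_neg (lt_irrefl _)]
          omega
        · obtain ⟨hgm, hlm, hst⟩ := (ih m).2.mp hmB
          obtain ⟨q1, q2, q3, q4⟩ := fwd m (lst m + 1) hgm hlm (by omega) (by omega)
          refine ⟨q1, q2, ?_⟩
          rw [q3, q4, if_pos (by omega)]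
          omega
      · rintro ⟨hg, hlen, hst⟩
        rcases List.eq_nil_or_concat l with rfl | ⟨m, v, rfl⟩
        · simp at hlen
        rw [List.concat_eq_append] at *
        have hlm : m.length = t + 1 := by
          rw [List.length_append, List.length_singleton] at hlen; omega
        have hmne : m ≠ [] := by
          intro h; rw [h] at hlm; simp at hlm
        have hgm : GoodL m := good_of_append hmne hg
        obtain ⟨hf, hv⟩ := (good_append_iff hmne hgm v).mp hg
        obtain ⟨s1, s2⟩ := good_state hmne hgm
        rw [lst_append, flo_append m hmne v] at hst
        rcases (by omega : lst m = flo m ∨ lst m = flo m + 1) with hd | hd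
        · left; left
          by_cases hc : lst m < v
          · rw [if_pos hc] at hst
            have hveq : v = lst m + 1 := by omega
            exact ⟨m, (ih m).1.mpr ⟨hgm, hlm, hd⟩, by rw [hveq]⟩
          · rw [if_neg hc] at hst; omega
        · by_cases hc : lst m < v
          · right
            rw [if_pos hc] at hst
            have hveq : v = lst m + 1 := by omega
            exact ⟨m, (ih m).2.mpr ⟨hgm, hlm, hd⟩, by rw [hveq]⟩
          · left; right
            rw [if_neg hc] at hst
            have hveq : v = lst m := by omega
            exact ⟨m, (ih m).2.mpr ⟨hgm, hlm, hd⟩, by rw [hveq]⟩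

lemma concat_inj (f : List ℕ → ℕ) : Function.Injective (fun l : List ℕ => l ++ [f l]) := by
  intro a b h
  have := congrArg List.dropLast h
  simpa using this

lemma AB_disj (t : ℕ) : Disjoint (AB t).1 (AB t).2 := by
  rw [Finset.disjoint_left]
  intro l h1 h2
  have a := (AB_mem t l).1.mp h1
  have b := (AB_mem t l).2.mp h2
  omega

lemma disj_images (s1 s2 : Finset (List ℕ)) (f1 f2 : List ℕ → ℕ)
    (h : ∀ m ∈ s1, ∀ m' ∈ s2, m = m' → f1 m ≠ f2 m') :
    Disjoint (s1.image (fun l => l ++ [f1 l])) (s2.image (fun l => l ++ [f2 l])) := by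
  rw [Finset.disjoint_left]
  rintro l hl1 hl2
  simp only [Finset.mem_image] at hl1 hl2
  obtain ⟨m, hm, he⟩ := hl1
  obtain ⟨m', hm', he'⟩ := hl2
  have hmm : m = m' := by
    have := congrArg List.dropLast (he.trans he'.symm)
    simpa using this
  apply h m hm m' hm' hmm
  subst hmm
  have := he.trans he'.symm
  simpa using this

lemma AB_card (t : ℕ) :
    (AB t).2.card = Nat.fib (2 * t) ∧
    (AB t).1.card + (AB t).2.card = Nat.fib (2 * t + 1) := by
  induction t with
  | zero => simp [AB_zero]
  | succ t ih =>
    have hne : ∀ m ∈ (AB t).1, ∀ m' ∈ (AB t).2, m = m' → True := fun _ _ _ _ _ => trivial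
    have hABne : ∀ (f1 f2 : List ℕ → ℕ), ∀ m ∈ (AB t).1, ∀ m' ∈ (AB t).2, m = m' → f1 m ≠ f2 m' := by
      intro f1 f2 m hm m' hm' he
      exact absurd (he ▸ hm') (Finset.disjoint_left.mp (AB_disj t) hm)
    have hA : (AB (t + 1)).1 =
        (AB t).1.image (fun l => l ++ [lst l]) ∪ (AB t).2.image (fun l => l ++ [lst l - 1]) := by
      rw [AB_succ]
    have hB : (AB (t + 1)).2 =
        ((AB t).1.image (fun l => l ++ [lst l + 1]) ∪ (AB t).2.image (fun l => l ++ [lst l])) ∪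
          (AB t).2.image (fun l => l ++ [lst l + 1]) := by
      rw [AB_succ]
    have c1 : (AB (t + 1)).1.card = (AB t).1.card + (AB t).2.card := by
      rw [hA]
      rw [Finset.card_union_of_disjoint (disj_images _ _ _ _ (hABne _ _)),
        Finset.card_image_of_injective _ (concat_inj _),
        Finset.card_image_of_injective _ (concat_inj _)]
    have c2 : (AB (t + 1)).2.card = (AB t).1.card + 2 * (AB t).2.card := by
      rw [hB]
      rw [Finset.card_union_of_disjoint, Finset.card_union_of_disjoint
          (disj_images _ _ _ _ (hABne _ _)),
        Finset.card_image_of_injective _ (concat_inj _),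
        Finset.card_image_of_injective _ (concat_inj _),
        Finset.card_image_of_injective _ (concat_inj _)]
      · ring
      · refine Finset.disjoint_union_left.mpr ⟨disj_images _ _ _ _ (hABne _ _), ?_⟩
        refine disj_images _ _ _ _ ?_
        intro m _ m' _ he
        subst he
        omega
    have f1 : Nat.fib (2 * t + 2) = Nat.fib (2 * t) + Nat.fib (2 * t + 1) := Nat.fib_add_two
    have f2 : Nat.fib (2 * t + 3) = Nat.fib (2 * t + 1) + Nat.fib (2 * t + 2) := Nat.fib_add_two
    have e1 : 2 * (t + 1) = 2 * t + 2 := by ring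
    have e2 : 2 * (t + 1) + 1 = 2 * t + 3 := by ring
    rw [c1, c2, e2, e1]
    omega

lemma g_ofFn {n : ℕ} (w : Fin n → ℕ) (i : ℕ) (h : i < n) :
    g (List.ofFn w) i = w ⟨i, h⟩ := by
  unfold g
  rw [List.getD_eq_getElem _ _ (by simpa using h)]
  simp

lemma ofFn_good {n : ℕ} (hn : 1 ≤ n) (w : Fin n → ℕ) :
    GoodL (List.ofFn w) ↔ IsCatalanWord w ∧ ¬ Contains23_1 w := by
  unfold GoodL
  simp only [List.length_ofFn]
  constructor
  · rintro ⟨p1, p2, p3, p4⟩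
    refine ⟨⟨fun i => ?_, fun h => ?_, fun i h => ?_⟩, ?_⟩
    · have := p1 i.1 i.2
      rwa [g_ofFn w i.1 i.2] at this
    · have := p2
      rwa [g_ofFn w 0 h] at this
    · have := p3 i h
      rwa [g_ofFn w (i + 1) h, g_ofFn w i (by omega)] at this
    · rintro ⟨i, k, hk, hik, hlt, hlt2⟩
      have := p4 i k hik hk
      rw [g_ofFn w i (by omega), g_ofFn w (i + 1) (by omega), g_ofFn w k hk] at this
      have := this hlt
      omega
  · rintro ⟨⟨c1, c2, c3⟩, hnc⟩
    refine ⟨fun i hi => ?_, ?_, fun i hi => ?_, fun i k hik hk hasc => ?_⟩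
    · rw [g_ofFn w i hi]; exact c1 _
    · rw [g_ofFn w 0 (by omega)]; exact c2 (by omega)
    · rw [g_ofFn w (i + 1) hi, g_ofFn w i (by omega)]; exact c3 i hi
    · have hin : i < n := by omega
      have hin2 : i + 1 < n := by omega
      rw [g_ofFn w i hin, g_ofFn w (i + 1) hin2] at hasc
      rw [g_ofFn w i hin, g_ofFn w k hk]
      by_contra hcon
      exact hnc ⟨i, k, hk, hik, hasc, by omega⟩


end Cat23

open Cat23 in
theorem catalan_avoid_23_1 (n : ℕ) (hn : 1 ≤ n) :
    Set.ncard {w : Fin n → ℕ | IsCatalanWord w ∧ ¬ Contains23_1 w} =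
      Nat.fib (2 * n - 1) := by
  obtain ⟨t, rfl⟩ : ∃ t, n = t + 1 := ⟨n - 1, by omega⟩
  set S := {w : Fin (t + 1) → ℕ | IsCatalanWord w ∧ ¬ Contains23_1 w} with hS
  have himg : List.ofFn '' S = ↑((AB t).1 ∪ (AB t).2) := by
    ext l
    simp only [Set.mem_image, Finset.coe_union, Set.mem_union, Finset.mem_coe]
    constructor
    · rintro ⟨w, hw, rfl⟩
      have hg : GoodL (List.ofFn w) := (ofFn_good (by omega) w).mpr hw
      have hlen : (List.ofFn w).length = t + 1 := by simp
      have hst := good_state (good_ne_nil hg) hg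
      rcases (by omega : lst (List.ofFn w) = flo (List.ofFn w) ∨
          lst (List.ofFn w) = flo (List.ofFn w) + 1) with hd | hd
      · exact Or.inl ((AB_mem t _).1.mpr ⟨hg, hlen, hd⟩)
      · exact Or.inr ((AB_mem t _).2.mpr ⟨hg, hlen, hd⟩)
    · intro h
      have hgl : GoodL l ∧ l.length = t + 1 := by
        rcases h with h | h
        · have := (AB_mem t l).1.mp h; exact ⟨this.1, this.2.1⟩
        · have := (AB_mem t l).2.mp h; exact ⟨this.1, this.2.1⟩
      obtain ⟨hg, hlen⟩ := hgl
      refine ⟨fun i => g l i.1, ?_, ?_⟩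
      · have hofn : List.ofFn (fun i : Fin (t + 1) => g l i.1) = l := by
          apply List.ext_getElem (by simp [hlen])
          intro i h1 h2
          simp only [List.getElem_ofFn]
          rw [show g l i = l.getD i 0 from rfl, List.getD_eq_getElem _ _ h2]
        rw [hS]
        simp only [Set.mem_setOf_eq]
        rw [← ofFn_good (by omega), hofn]
        exact hg
      · apply List.ext_getElem (by simp [hlen])
        intro i h1 h2
        simp only [List.getElem_ofFn]
        rw [show g l i = l.getD i 0 from rfl, List.getD_eq_getElem _ _ h2]
  have hcard : S.ncard = ((AB t).1 ∪ (AB t).2).card := by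
    rw [← Set.ncard_coe_finset, ← himg,
      Set.ncard_image_of_injective _ List.ofFn_injective]
  rw [hcard, Finset.card_union_of_disjoint (AB_disj t)]
  have := AB_card t
  rw [show 2 * (t + 1) - 1 = 2 * t + 1 by omega]
  omega
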